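/- arXiv:2207.12853 — 5 statements merged into one kernel-verified Lean document; each statement's English description precedes it below -/
import Mathlib

section
/- Let n ≥ 1 be an integer, let F : ℝ → [0,1] be nondecreasing, let a ∈ ℝ with F(a) = 1/2, let b ∈ ℝ, let λ ∈ [0,1], and set x = (1−λ)a + λb. Then (1 − F(x))^n + F(x)^n ≤ (1 − F(b))^n + F(b)^n; equivalently, 1 − (1 − F(x))^n − F(x)^n ≥ 1 − (1 − F(b))^n − F(b)^n. That is, the coverage-probability integrand does not decrease when b is moved along the segment towards a median point a. -/
/-- On `[1/2, 1]`, the map `t ↦ (1-t)^n + t^n` is monotone. -/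
lemma gmono (n : ℕ) (s t : ℝ) (hs : 1/2 ≤ s) (hst : s ≤ t) (ht : t ≤ 1) :
    (1 - s) ^ n + s ^ n ≤ (1 - t) ^ n + t ^ n := by
  have h1 : (1 - s) ^ n - (1 - t) ^ n
      = (∑ i ∈ Finset.range n, (1 - s) ^ i * (1 - t) ^ (n - 1 - i)) * ((1 - s) - (1 - t)) :=
    (geom_sum₂_mul (1 - s) (1 - t) n).symm
  have h2 : t ^ n - s ^ n
      = (∑ i ∈ Finset.range n, t ^ i * s ^ (n - 1 - i)) * (t - s) :=
    (geom_sum₂_mul t s n).symm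
  have hsum : (∑ i ∈ Finset.range n, (1 - s) ^ i * (1 - t) ^ (n - 1 - i))
      ≤ ∑ i ∈ Finset.range n, t ^ i * s ^ (n - 1 - i) := by
    apply Finset.sum_le_sum
    intro i _
    have h1t : (0:ℝ) ≤ 1 - t := by linarith
    have h1s : (0:ℝ) ≤ 1 - s := by linarith
    have hts : 1 - s ≤ t := by linarith
    have hst' : 1 - t ≤ s := by linarith
    exact mul_le_mul (pow_le_pow_left₀ h1s hts i) (pow_le_pow_left₀ h1t hst' _)
      (pow_nonneg h1t _) (pow_nonneg (by linarith : (0:ℝ) ≤ t) _)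
  have key : (1 - s) ^ n - (1 - t) ^ n ≤ t ^ n - s ^ n := by
    rw [h1, h2]
    have : (1 - s) - (1 - t) = t - s := by ring
    rw [this]
    exact mul_le_mul_of_nonneg_right hsum (by linarith)
  linarith

/-- If `F : ℝ → [0,1]` is nondecreasing, `F a = 1/2`, `l ∈ [0,1]` and `x = (1-l)a + lb`,
then `(1 - F x)^n + (F x)^n ≤ (1 - F b)^n + (F b)^n`; equivalently, the coverage-probability
integrand does not decrease when `b` is moved along the segment towards the median `a`. -/
theorem stmt7 (n : ℕ) (hn : 1 ≤ n) (F : ℝ → ℝ) (hmono : Monotone F)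
    (hF0 : ∀ t, 0 ≤ F t) (hF1 : ∀ t, F t ≤ 1)
    (a : ℝ) (ha : F a = 1 / 2) (b : ℝ) (l : ℝ) (hl : l ∈ Set.Icc (0 : ℝ) 1)
    (x : ℝ) (hx : x = (1 - l) * a + l * b) :
    (1 - F x) ^ n + F x ^ n ≤ (1 - F b) ^ n + F b ^ n ∧
    1 - (1 - F b) ^ n - F b ^ n ≤ 1 - (1 - F x) ^ n - F x ^ n := by
  obtain ⟨hl0, hl1⟩ := hl
  have main : (1 - F x) ^ n + F x ^ n ≤ (1 - F b) ^ n + F b ^ n := by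
    rcases le_total a b with hab | hab
    · -- a ≤ x ≤ b, so 1/2 ≤ F x ≤ F b
      have hax : a ≤ x := by rw [hx]; nlinarith
      have hxb : x ≤ b := by rw [hx]; nlinarith
      have h1 : 1/2 ≤ F x := ha ▸ hmono hax
      have h2 : F x ≤ F b := hmono hxb
      exact gmono n (F x) (F b) h1 h2 (hF1 b)
    · -- b ≤ x ≤ a, so F b ≤ F x ≤ 1/2; use symmetry with s = 1 - F x, t = 1 - F b
      have hbx : b ≤ x := by rw [hx]; nlinarith
      have hxa : x ≤ a := by rw [hx]; nlinarith
      have h1 : F x ≤ 1/2 := ha ▸ hmono hxa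
      have h2 : F b ≤ F x := hmono hbx
      have := gmono n (1 - F x) (1 - F b) (by linarith) (by linarith)
        (by linarith [hF0 b])
      have e1 : (1 - (1 - F x)) = F x := by ring
      have e2 : (1 - (1 - F b)) = F b := by ring
      rw [e1, e2] at this
      linarith
  exact ⟨main, by linarith⟩
end

section
/- Let p ≥ 1, let M : ℝ^p → ℝ^p be an invertible linear map, let b ∈ ℝ^p, and let A, A_1, …, A_{p+1} be nonempty compact convex subsets of ℝ^p. Then A belongs to the pseudosimplex S_c[A_1,…,A_{p+1}] if and only if the image M(A) + b = {M v + b : v ∈ A} belongs to the pseudosimplex S_c[M(A_1)+b, …, M(A_{p+1})+b]. -/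
open scoped RealInnerProductSpace

/-- The support function `s_A(u) = sup_{v ∈ A} ⟪u, v⟫`. -/
noncomputable def suppFn {p : ℕ} (A : Set (EuclideanSpace ℝ (Fin p)))
    (u : EuclideanSpace ℝ (Fin p)) : ℝ :=
  sSup ((fun v => ⟪u, v⟫) '' A)

/-- `A` belongs to the pseudosimplex `S_c[As 0, …, As p]`: `A` is a nonempty compact convex set
whose support function lies between the minimum and maximum of the support functions of the
generators in every unit direction. -/
def memPseudoSimplex {p : ℕ} (A : Set (EuclideanSpace ℝ (Fin p)))
    (As : Fin (p + 1) → Set (EuclideanSpace ℝ (Fin p))) : Prop :=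
  A.Nonempty ∧ IsCompact A ∧ Convex ℝ A ∧
  ∀ u : EuclideanSpace ℝ (Fin p), ‖u‖ = 1 →
    Finset.univ.inf' Finset.univ_nonempty (fun i => suppFn (As i) u) ≤ suppFn A u ∧
    suppFn A u ≤ Finset.univ.sup' Finset.univ_nonempty (fun i => suppFn (As i) u)

/-! The support function of `M(A) + b` in direction `u` is `s_A(Mᵀu) + ⟪u, b⟫`, and support
functions are positively homogeneous. So the pseudosimplex inequalities for the images in a
direction `u` are those for the original sets in direction `Mᵀu`, shifted by `⟪u, b⟫`; and
checking them on unit vectors is the same as checking them on all nonzero vectors, which the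
invertible map `Mᵀ` permutes. -/

section

variable {E : Type*} [NormedAddCommGroup E] [NormedSpace ℝ E]

theorem forall_norm_eq_one_iff_forall_ne_zero {P : E → Prop}
    (hP : ∀ t : ℝ, 0 < t → ∀ u, P (t • u) ↔ P u) :
    (∀ u, ‖u‖ = 1 → P u) ↔ ∀ u ≠ 0, P u := by
  refine ⟨fun h u hu => ?_, fun h u hu => h u (norm_ne_zero_iff.mp (hu ▸ one_ne_zero))⟩
  rw [← hP ‖u‖⁻¹ (inv_pos.mpr (norm_pos_iff.mpr hu))]
  exact h _ (norm_smul_inv_norm hu)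

end

section

variable {E : Type*} [NormedAddCommGroup E] [InnerProductSpace ℝ E] [FiniteDimensional ℝ E]

theorem LinearMap.bijective_adjoint {M : E →ₗ[ℝ] E} (hM : Function.Bijective M) :
    Function.Bijective M.adjoint := by
  have hker : LinearMap.ker M.adjoint = ⊥ := by
    rw [← LinearMap.orthogonal_range, LinearMap.range_eq_top.mpr hM.2,
      Submodule.top_orthogonal_eq_bot]
  have hinj := LinearMap.ker_eq_bot.mp hker
  exact ⟨hinj, LinearMap.injective_iff_surjective.mp hinj⟩

end

variable {p : ℕ}

def SuppFnBetween (A : Set (EuclideanSpace ℝ (Fin p)))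
    (As : Fin (p + 1) → Set (EuclideanSpace ℝ (Fin p))) (u : EuclideanSpace ℝ (Fin p)) : Prop :=
  Finset.univ.inf' Finset.univ_nonempty (fun i => suppFn (As i) u) ≤ suppFn A u ∧
    suppFn A u ≤ Finset.univ.sup' Finset.univ_nonempty (fun i => suppFn (As i) u)

theorem memPseudoSimplex_iff_forall_suppFnBetween {A : Set (EuclideanSpace ℝ (Fin p))}
    {As : Fin (p + 1) → Set (EuclideanSpace ℝ (Fin p))}
    (hAne : A.Nonempty) (hAc : IsCompact A) (hAv : Convex ℝ A) :
    memPseudoSimplex A As ↔ ∀ u, ‖u‖ = 1 → SuppFnBetween A As u := by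
  simp only [memPseudoSimplex, SuppFnBetween, hAne, hAc, hAv, true_and]

theorem suppFnBetween_congr (e : ℝ ≃o ℝ) {A B : Set (EuclideanSpace ℝ (Fin p))}
    {As Bs : Fin (p + 1) → Set (EuclideanSpace ℝ (Fin p))} {u w : EuclideanSpace ℝ (Fin p)}
    (h : suppFn B u = e (suppFn A w)) (hs : ∀ i, suppFn (Bs i) u = e (suppFn (As i) w)) :
    SuppFnBetween B Bs u ↔ SuppFnBetween A As w := by
  have hinf : Finset.univ.inf' Finset.univ_nonempty (fun i => suppFn (Bs i) u) =
      e (Finset.univ.inf' Finset.univ_nonempty fun i => suppFn (As i) w) := by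
    simp only [hs]
    exact (map_finset_inf' e _ _).symm
  have hsup : Finset.univ.sup' Finset.univ_nonempty (fun i => suppFn (Bs i) u) =
      e (Finset.univ.sup' Finset.univ_nonempty fun i => suppFn (As i) w) := by
    simp only [hs]
    exact (map_finset_sup' e _ _).symm
  rw [SuppFnBetween, SuppFnBetween, h, hinf, hsup, e.le_iff_le, e.le_iff_le]

theorem suppFn_smul (A : Set (EuclideanSpace ℝ (Fin p))) {t : ℝ} (ht : 0 ≤ t)
    (u : EuclideanSpace ℝ (Fin p)) : suppFn A (t • u) = t * suppFn A u := by
  rw [suppFn, suppFn, ← smul_eq_mul, ← Real.sSup_smul_of_nonneg ht, ← Set.image_smul,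
    Set.image_image]
  simp only [real_inner_smul_left, smul_eq_mul]

theorem suppFnBetween_smul {A : Set (EuclideanSpace ℝ (Fin p))}
    {As : Fin (p + 1) → Set (EuclideanSpace ℝ (Fin p))} {t : ℝ} (ht : 0 < t)
    (u : EuclideanSpace ℝ (Fin p)) : SuppFnBetween A As (t • u) ↔ SuppFnBetween A As u :=
  suppFnBetween_congr (OrderIso.mulLeft₀ t ht) (suppFn_smul A ht.le u)
    fun i => suppFn_smul (As i) ht.le u

theorem suppFn_affine_image (M : EuclideanSpace ℝ (Fin p) →ₗ[ℝ] EuclideanSpace ℝ (Fin p))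
    (b : EuclideanSpace ℝ (Fin p)) {A : Set (EuclideanSpace ℝ (Fin p))} (hAne : A.Nonempty)
    (hAb : Bornology.IsBounded A) (u : EuclideanSpace ℝ (Fin p)) :
    suppFn ((fun v => M v + b) '' A) u = suppFn A (M.adjoint u) + ⟪u, b⟫ := by
  have hcomp : (fun v => ⟪u, M v + b⟫) = (· + ⟪u, b⟫) ∘ fun v => ⟪M.adjoint u, v⟫ := by
    ext v
    simp only [Function.comp_apply, inner_add_right, LinearMap.adjoint_inner_left]
  rw [suppFn, suppFn, Set.image_image, hcomp, Set.image_comp]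
  exact ((OrderIso.addRight ⟪u, b⟫).map_csSup' (hAne.image _)
    ((innerSL ℝ (M.adjoint u)).lipschitz.isBounded_image hAb).bddAbove).symm

theorem suppFnBetween_affine_image (M : EuclideanSpace ℝ (Fin p) →ₗ[ℝ] EuclideanSpace ℝ (Fin p))
    (b : EuclideanSpace ℝ (Fin p)) {A : Set (EuclideanSpace ℝ (Fin p))}
    {As : Fin (p + 1) → Set (EuclideanSpace ℝ (Fin p))} (hAne : A.Nonempty)
    (hAb : Bornology.IsBounded A) (hne : ∀ i, (As i).Nonempty)
    (hb : ∀ i, Bornology.IsBounded (As i)) (u : EuclideanSpace ℝ (Fin p)) :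
    SuppFnBetween ((fun v => M v + b) '' A) (fun i => (fun v => M v + b) '' As i) u ↔
      SuppFnBetween A As (M.adjoint u) :=
  suppFnBetween_congr (OrderIso.addRight ⟪u, b⟫) (suppFn_affine_image M b hAne hAb u)
    fun i => suppFn_affine_image M b (hne i) (hb i) u

theorem Function.Bijective.forall_ne_zero_comp_iff {G E F : Type*} [Zero E] [Zero F]
    [FunLike G E F] [ZeroHomClass G E F] {f : G} (hf : Function.Bijective f) {P : F → Prop} :
    (∀ u ≠ 0, P (f u)) ↔ ∀ w ≠ 0, P w := by
  refine ⟨fun h w hw => ?_, fun h u hu => h _ ((map_ne_zero_iff f hf.1).mpr hu)⟩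
  obtain ⟨u, rfl⟩ := hf.2 w
  exact h u fun hu => hw (by rw [hu, map_zero])

theorem stmt10_general (p : ℕ)
    (M : EuclideanSpace ℝ (Fin p) →ₗ[ℝ] EuclideanSpace ℝ (Fin p))
    (hM : Function.Bijective M) (b : EuclideanSpace ℝ (Fin p))
    (A : Set (EuclideanSpace ℝ (Fin p)))
    (As : Fin (p + 1) → Set (EuclideanSpace ℝ (Fin p)))
    (hAne : A.Nonempty) (hAc : IsCompact A) (hAv : Convex ℝ A)
    (hne : ∀ i, (As i).Nonempty) (hc : ∀ i, IsCompact (As i)) :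
    memPseudoSimplex A As ↔
      memPseudoSimplex ((fun v => M v + b) '' A) (fun i => (fun v => M v + b) '' As i) := by
  have hcont : Continuous fun v => M v + b :=
    M.continuous_of_finiteDimensional.add continuous_const
  have hconv : Convex ℝ ((fun v => M v + b) '' A) :=
    hAv.affine_image (M.toAffineMap + AffineMap.const ℝ _ b)
  rw [memPseudoSimplex_iff_forall_suppFnBetween hAne hAc hAv,
    memPseudoSimplex_iff_forall_suppFnBetween (hAne.image _) (hAc.image hcont) hconv,
    forall_norm_eq_one_iff_forall_ne_zero fun _ ht u => suppFnBetween_smul ht u,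
    forall_norm_eq_one_iff_forall_ne_zero fun _ ht u => suppFnBetween_smul ht u]
  simp only [suppFnBetween_affine_image M b hAne hAc.isBounded hne fun i => (hc i).isBounded]
  exact (LinearMap.bijective_adjoint hM).forall_ne_zero_comp_iff.symm

/-- Affine equivariance of pseudosimplices: for an invertible linear map `M` and `b ∈ ℝ^p`,
`A ∈ S_c[A₁,…,A_{p+1}]` iff `M(A) + b ∈ S_c[M(A₁)+b, …, M(A_{p+1})+b]`. -/
theorem stmt10 (p : ℕ) (hp : 1 ≤ p)
    (M : EuclideanSpace ℝ (Fin p) →ₗ[ℝ] EuclideanSpace ℝ (Fin p))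
    (hM : Function.Bijective M) (b : EuclideanSpace ℝ (Fin p))
    (A : Set (EuclideanSpace ℝ (Fin p)))
    (As : Fin (p + 1) → Set (EuclideanSpace ℝ (Fin p)))
    (hAne : A.Nonempty) (hAc : IsCompact A) (hAv : Convex ℝ A)
    (hne : ∀ i, (As i).Nonempty) (hc : ∀ i, IsCompact (As i)) (hv : ∀ i, Convex ℝ (As i)) :
    memPseudoSimplex A As ↔
      memPseudoSimplex ((fun v => M v + b) '' A) (fun i => (fun v => M v + b) '' As i) :=
  stmt10_general p M hM b A As hAne hAc hAv hne hc
end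

section
/- Let p ≥ 1, k ≥ 1, let (Ω, 𝒜) be a measurable space, let h : 𝕊^{p−1} × [0,1] → ℝ, and let f_1, …, f_k : Ω × 𝕊^{p−1} × [0,1] → ℝ satisfy: (i) for each fixed (u,α) ∈ 𝕊^{p−1} × [0,1] and each i, the map ω ↦ f_i(ω,u,α) is measurable; (ii) for each fixed ω ∈ Ω and α ∈ [0,1], the maps u ↦ f_i(ω,u,α) and u ↦ h(u,α) are continuous on 𝕊^{p−1}; (iii) for each fixed ω ∈ Ω and u ∈ 𝕊^{p−1}, the maps α ↦ f_i(ω,u,α) and α ↦ h(u,α) are left-continuous at every α ∈ (0,1]. Then the set { ω ∈ Ω : min_{1≤i≤k} f_i(ω,u,α) ≤ h(u,α) ≤ max_{1≤i≤k} f_i(ω,u,α) for all (u,α) ∈ 𝕊^{p−1} × [0,1] } belongs to 𝒜. -/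
open Filter Topology Set

/-- Tendsto of a finite infimum of real-valued functions. -/
lemma aux_tendsto_iInf {k : ℕ} [Nonempty (Fin k)] {β : Type*} {l : Filter β}
    {g : Fin k → β → ℝ} {L : Fin k → ℝ} (hg : ∀ i, Tendsto (g i) l (𝓝 (L i))) :
    Tendsto (fun b => ⨅ i, g i b) l (𝓝 (⨅ i, L i)) := by
  have H := Filter.Tendsto.finset_inf'_nhds_apply (s := (Finset.univ : Finset (Fin k)))
    Finset.univ_nonempty (fun i _ => hg i)
  simpa only [Finset.inf'_univ_eq_ciInf] using H

lemma aux_tendsto_iSup {k : ℕ} [Nonempty (Fin k)] {β : Type*} {l : Filter β}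
    {g : Fin k → β → ℝ} {L : Fin k → ℝ} (hg : ∀ i, Tendsto (g i) l (𝓝 (L i))) :
    Tendsto (fun b => ⨆ i, g i b) l (𝓝 (⨆ i, L i)) := by
  have H := Filter.Tendsto.finset_sup'_nhds_apply (s := (Finset.univ : Finset (Fin k)))
    Finset.univ_nonempty (fun i _ => hg i)
  simpa only [Finset.sup'_univ_eq_ciSup] using H

/-- Measurability of the event defining the naive simplicial fuzzy depth: if the
`f i : Ω × 𝕊^{p-1} × [0,1] → ℝ` are measurable in `ω` for fixed `(u,α)`, continuous in `u`
for fixed `(ω,α)`, and left-continuous in `α` on `(0,1]` for fixed `(ω,u)`, and `h` is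
continuous in `u` and left-continuous in `α`, then the set of `ω` such that
`min_i f i ω u α ≤ h u α ≤ max_i f i ω u α` for all `(u,α) ∈ 𝕊^{p-1} × [0,1]` is measurable. -/
theorem stmt14 (p k : ℕ) (hp : 1 ≤ p) (hk : 1 ≤ k)
    {Ω : Type*} [MeasurableSpace Ω]
    (h : EuclideanSpace ℝ (Fin p) → ℝ → ℝ)
    (f : Fin k → Ω → EuclideanSpace ℝ (Fin p) → ℝ → ℝ)
    (hmeas : ∀ i, ∀ u ∈ Metric.sphere (0 : EuclideanSpace ℝ (Fin p)) 1,
      ∀ α ∈ Set.Icc (0 : ℝ) 1, Measurable fun ω => f i ω u α)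
    (hcont : ∀ i, ∀ ω : Ω, ∀ α ∈ Set.Icc (0 : ℝ) 1,
      ContinuousOn (fun u => f i ω u α) (Metric.sphere (0 : EuclideanSpace ℝ (Fin p)) 1))
    (hconth : ∀ α ∈ Set.Icc (0 : ℝ) 1,
      ContinuousOn (fun u => h u α) (Metric.sphere (0 : EuclideanSpace ℝ (Fin p)) 1))
    (hleft : ∀ i, ∀ ω : Ω, ∀ u ∈ Metric.sphere (0 : EuclideanSpace ℝ (Fin p)) 1,
      ∀ α ∈ Set.Ioc (0 : ℝ) 1,
      Filter.Tendsto (fun β => f i ω u β) (nhdsWithin α (Set.Iio α)) (nhds (f i ω u α)))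
    (hlefth : ∀ u ∈ Metric.sphere (0 : EuclideanSpace ℝ (Fin p)) 1,
      ∀ α ∈ Set.Ioc (0 : ℝ) 1,
      Filter.Tendsto (fun β => h u β) (nhdsWithin α (Set.Iio α)) (nhds (h u α))) :
    MeasurableSet {ω : Ω | ∀ u ∈ Metric.sphere (0 : EuclideanSpace ℝ (Fin p)) 1,
      ∀ α ∈ Set.Icc (0 : ℝ) 1,
      (⨅ i, f i ω u α) ≤ h u α ∧ h u α ≤ ⨆ i, f i ω u α} := by
  haveI : Nonempty (Fin k) := ⟨⟨0, hk⟩⟩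
  set S : Set (EuclideanSpace ℝ (Fin p)) := Metric.sphere 0 1 with hS
  -- countable dense subset of the sphere
  obtain ⟨D, hDsub, hDcount, hDdense⟩ :=
    (TopologicalSpace.IsSeparable.of_separableSpace S).exists_countable_dense_subset
  -- countable set of levels
  set T : Set ℝ := insert 0 (Set.range ((↑) : ℚ → ℝ) ∩ Set.Icc 0 1) with hT
  have hTcount : T.Countable := (Set.countable_range _).mono Set.inter_subset_left |>.insert 0
  have hTIcc : T ⊆ Set.Icc (0 : ℝ) 1 := by
    rintro x (rfl | ⟨-, hx⟩)
    · exact ⟨le_refl 0, zero_le_one⟩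
    · exact hx
  -- the countable version of the set
  have hset : {ω : Ω | ∀ u ∈ S, ∀ α ∈ Set.Icc (0 : ℝ) 1,
        (⨅ i, f i ω u α) ≤ h u α ∧ h u α ≤ ⨆ i, f i ω u α}
      = ⋂ u ∈ D, ⋂ α ∈ T, {ω : Ω |
        (⨅ i, f i ω u α) ≤ h u α ∧ h u α ≤ ⨆ i, f i ω u α} := by
    ext ω
    simp only [Set.mem_setOf_eq, Set.mem_iInter]
    constructor
    · intro hω u hu α hα
      exact hω u (hDsub hu) α (hTIcc hα)
    · intro hω
      -- Step 1: extend from D to all of S, for levels in T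
      have step1 : ∀ α ∈ T, ∀ u ∈ S,
          (⨅ i, f i ω u α) ≤ h u α ∧ h u α ≤ ⨆ i, f i ω u α := by
        intro α hαT u hu
        have hαI : α ∈ Set.Icc (0 : ℝ) 1 := hTIcc hαT
        have hucl : u ∈ closure D := hDdense hu
        have hne : (𝓝[D] u).NeBot := mem_closure_iff_nhdsWithin_neBot.mp hucl
        have hle : 𝓝[D] u ≤ 𝓝[S] u := nhdsWithin_mono _ hDsub
        have htf : ∀ i, Tendsto (fun v => f i ω v α) (𝓝[D] u) (𝓝 (f i ω u α)) :=
          fun i => ((hcont i ω α hαI u hu).mono_left hle)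
        have hth : Tendsto (fun v => h v α) (𝓝[D] u) (𝓝 (h u α)) :=
          (hconth α hαI u hu).mono_left hle
        have hinf : Tendsto (fun v => ⨅ i, f i ω v α) (𝓝[D] u) (𝓝 (⨅ i, f i ω u α)) :=
          aux_tendsto_iInf htf
        have hsup : Tendsto (fun v => ⨆ i, f i ω v α) (𝓝[D] u) (𝓝 (⨆ i, f i ω u α)) :=
          aux_tendsto_iSup htf
        have hev : ∀ᶠ v in 𝓝[D] u, v ∈ D := eventually_mem_nhdsWithin
        constructor
        · exact le_of_tendsto_of_tendsto hinf hth
            (hev.mono fun v hv => (hω v hv α hαT).1)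
        · exact le_of_tendsto_of_tendsto hth hsup
            (hev.mono fun v hv => (hω v hv α hαT).2)
      -- Step 2: extend from T to all of [0,1]
      intro u hu α hα
      rcases eq_or_lt_of_le hα.1 with hα0 | hα0
      · subst hα0
        exact step1 0 (Set.mem_insert _ _) u hu
      · -- α > 0 : approximate from the left by rationals
        set E : Set ℝ := Set.Ioo 0 α ∩ Set.range ((↑) : ℚ → ℝ) with hE
        have hcls : α ∈ closure E := by
          rw [Metric.mem_closure_iff]
          intro ε hε
          obtain ⟨q, hq1, hq2⟩ := exists_rat_btwn (show max 0 (α - ε) < α by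
            rw [max_lt_iff]; exact ⟨hα0, by linarith⟩)
          refine ⟨(q : ℝ), ⟨⟨lt_of_le_of_lt (le_max_left _ _) hq1, hq2⟩, ⟨q, rfl⟩⟩, ?_⟩
          rw [Real.dist_eq, abs_lt]
          have hme := lt_of_le_of_lt (le_max_right 0 (α - ε)) hq1
          constructor <;> linarith
        have hne : (𝓝[E] α).NeBot := mem_closure_iff_nhdsWithin_neBot.mp hcls
        have hle : 𝓝[E] α ≤ 𝓝[Set.Iio α] α :=
          nhdsWithin_mono _ (fun x hx => hx.1.2)
        have hαIoc : α ∈ Set.Ioc (0 : ℝ) 1 := ⟨hα0, hα.2⟩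
        have htf : ∀ i, Tendsto (fun β => f i ω u β) (𝓝[E] α) (𝓝 (f i ω u α)) :=
          fun i => (hleft i ω u hu α hαIoc).mono_left hle
        have hth : Tendsto (fun β => h u β) (𝓝[E] α) (𝓝 (h u α)) :=
          (hlefth u hu α hαIoc).mono_left hle
        have hinf : Tendsto (fun β => ⨅ i, f i ω u β) (𝓝[E] α) (𝓝 (⨅ i, f i ω u α)) :=
          aux_tendsto_iInf htf
        have hsup : Tendsto (fun β => ⨆ i, f i ω u β) (𝓝[E] α) (𝓝 (⨆ i, f i ω u α)) :=
          aux_tendsto_iSup htf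
        have hev : ∀ᶠ β in 𝓝[E] α, β ∈ E := eventually_mem_nhdsWithin
        have hmemT : ∀ β ∈ E, β ∈ T := by
          rintro β ⟨⟨hβ0, hβα⟩, hβq⟩
          exact Set.mem_insert_of_mem _ ⟨hβq, ⟨le_of_lt hβ0, le_trans (le_of_lt hβα) hα.2⟩⟩
        constructor
        · exact le_of_tendsto_of_tendsto hinf hth
            (hev.mono fun β hβ => (step1 β (hmemT β hβ) u hu).1)
        · exact le_of_tendsto_of_tendsto hth hsup
            (hev.mono fun β hβ => (step1 β (hmemT β hβ) u hu).2)
  rw [hset]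
  refine MeasurableSet.biInter hDcount fun u hu => MeasurableSet.biInter hTcount fun α hα => ?_
  have hαI := hTIcc hα
  have huS := hDsub hu
  have hminf : Measurable fun ω => ⨅ i, f i ω u α :=
    Measurable.iInf fun i => hmeas i u huS α hαI
  have hmsup : Measurable fun ω => ⨆ i, f i ω u α :=
    Measurable.iSup fun i => hmeas i u huS α hαI
  have h1 : MeasurableSet {ω : Ω | (⨅ i, f i ω u α) ≤ h u α} :=
    measurableSet_le hminf measurable_const
  have h2 : MeasurableSet {ω : Ω | h u α ≤ ⨆ i, f i ω u α} :=
    measurableSet_le measurable_const hmsup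
  exact h1.inter h2
end

section
/- Let p ≥ 1, let X_1, …, X_{p+1} : Ω → ℝ^p be Borel-measurable random vectors on a probability space (Ω, 𝒜, ℙ), and let x ∈ ℝ^p. Then the sets { ω ∈ Ω : min_{1≤i≤p+1} ⟨u, X_i(ω)⟩ ≤ ⟨u, x⟩ ≤ max_{1≤i≤p+1} ⟨u, X_i(ω)⟩ for all u ∈ 𝕊^{p−1} } and { ω ∈ Ω : x ∈ convexHull{X_1(ω), …, X_{p+1}(ω)} } coincide; in particular this set is measurable and ℙ( x ∈ convexHull{X_1, …, X_{p+1}} ) = ℙ( ⟨u,x⟩ ∈ [min_i ⟨u,X_i⟩, max_i ⟨u,X_i⟩] for all u ∈ 𝕊^{p−1} ). -/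
open scoped RealInnerProductSpace
open MeasureTheory

/-!
A linear functional attains its extrema over the convex hull of finitely many points at those
points, so every point of the hull projects between the smallest and largest projection of the
points. Conversely, a point outside the (closed, convex) hull is strictly separated from it by a
hyperplane (Hahn–Banach), whose unit normal `u` violates the lower bound. Measurability comes for
free: for each `u` the slab condition is closed in the configuration `(X 0 ω, …, X p ω)`, so the
event is the preimage of an intersection of closed sets under a measurable map.
-/

section InnerProductSpace

variable {E : Type*} [NormedAddCommGroup E] [InnerProductSpace ℝ E]

lemma exists_norm_eq_one_inner_lt_of_notMem [CompleteSpace E] {t : Set E} (htc : Convex ℝ t)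
    (htcl : IsClosed t) (hne : t.Nonempty) {x : E} (hx : x ∉ t) :
    ∃ u : E, ‖u‖ = 1 ∧ ∀ y ∈ t, ⟪u, x⟫ < ⟪u, y⟫ := by
  obtain ⟨f, s, hfx, hft⟩ := geometric_hahn_banach_point_closed htc htcl hx
  set w := (InnerProductSpace.toDual ℝ E).symm f
  have hw : ∀ y ∈ t, ⟪w, x⟫ < ⟪w, y⟫ := fun y hy => by
    simpa only [w, InnerProductSpace.toDual_symm_apply] using hfx.trans (hft y hy)
  obtain ⟨y₀, hy₀⟩ := hne
  have hw0 : w ≠ 0 := by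
    rintro h
    simpa [h] using hw y₀ hy₀
  refine ⟨(‖w‖⁻¹ : ℝ) • w, norm_smul_inv_norm hw0, fun y hy => ?_⟩
  simp only [real_inner_smul_left]
  exact mul_lt_mul_of_pos_left (hw y hy) (by positivity)

variable {ι : Type*} [Fintype ι] [Nonempty ι]

lemma inf'_inner_le_and_le_sup'_of_mem_convexHull {v : ι → E} {x : E}
    (hx : x ∈ convexHull ℝ (Set.range v)) (u : E) :
    Finset.univ.inf' Finset.univ_nonempty (fun i => ⟪u, v i⟫) ≤ ⟪u, x⟫ ∧
      ⟪u, x⟫ ≤ Finset.univ.sup' Finset.univ_nonempty (fun i => ⟪u, v i⟫) := by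
  obtain ⟨_, ⟨i, rfl⟩, hi⟩ :=
    ((innerₛₗ ℝ u).concaveOn convex_univ).exists_le_of_mem_convexHull (Set.subset_univ _) hx
  obtain ⟨_, ⟨j, rfl⟩, hj⟩ :=
    ((innerₛₗ ℝ u).convexOn convex_univ).exists_ge_of_mem_convexHull (Set.subset_univ _) hx
  exact ⟨Finset.inf'_le_of_le _ (Finset.mem_univ i) hi,
    Finset.le_sup'_of_le _ (Finset.mem_univ j) hj⟩

lemma forall_inf'_inner_le_and_le_sup'_iff_mem_convexHull [CompleteSpace E] (v : ι → E) (x : E) :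
    (∀ u : E, ‖u‖ = 1 →
        Finset.univ.inf' Finset.univ_nonempty (fun i => ⟪u, v i⟫) ≤ ⟪u, x⟫ ∧
        ⟪u, x⟫ ≤ Finset.univ.sup' Finset.univ_nonempty (fun i => ⟪u, v i⟫)) ↔
      x ∈ convexHull ℝ (Set.range v) := by
  refine ⟨fun h => ?_, fun hx u _ => inf'_inner_le_and_le_sup'_of_mem_convexHull hx u⟩
  by_contra hx
  have hclosed : IsClosed (convexHull ℝ (Set.range v)) :=
    (Set.finite_range v).isCompact_convexHull (𝕜 := ℝ) |>.isClosed
  obtain ⟨u, hu, hlt⟩ := exists_norm_eq_one_inner_lt_of_notMem (convex_convexHull ℝ _) hclosed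
    ((Set.range_nonempty v).mono (subset_convexHull ℝ _)) hx
  obtain ⟨i, -, hi⟩ := Finset.exists_mem_eq_inf' Finset.univ_nonempty (fun i => ⟪u, v i⟫)
  exact (h u hu).1.not_gt (hi ▸ hlt _ (subset_convexHull ℝ _ ⟨i, rfl⟩))

lemma isClosed_setOf_mem_convexHull_range [CompleteSpace E] (x : E) :
    IsClosed {v : ι → E | x ∈ convexHull ℝ (Set.range v)} := by
  have hslab (u : E) : IsClosed {v : ι → E |
      Finset.univ.inf' Finset.univ_nonempty (fun i => ⟪u, v i⟫) ≤ ⟪u, x⟫ ∧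
        ⟪u, x⟫ ≤ Finset.univ.sup' Finset.univ_nonempty (fun i => ⟪u, v i⟫)} := by
    have hinf : Continuous fun v : ι → E =>
        Finset.univ.inf' Finset.univ_nonempty (fun i => ⟪u, v i⟫) :=
      Continuous.finset_inf'_apply _ fun i _ => by fun_prop
    have hsup : Continuous fun v : ι → E =>
        Finset.univ.sup' Finset.univ_nonempty (fun i => ⟪u, v i⟫) :=
      Continuous.finset_sup'_apply _ fun i _ => by fun_prop
    exact (isClosed_le hinf continuous_const).inter (isClosed_le continuous_const hsup)
  convert isClosed_iInter fun u => isClosed_iInter fun (_ : ‖u‖ = 1) => hslab u using 1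
  ext v
  simp only [Set.mem_ofPred_eq, Set.mem_iInter,
    ← forall_inf'_inner_le_and_le_sup'_iff_mem_convexHull v x]

end InnerProductSpace

lemma measurableSet_setOf_mem_convexHull_range {Ω E ι : Type*} [MeasurableSpace Ω]
    [NormedAddCommGroup E] [InnerProductSpace ℝ E] [CompleteSpace E] [SecondCountableTopology E]
    [MeasurableSpace E] [BorelSpace E] [Fintype ι] [Nonempty ι] {X : ι → Ω → E}
    (hX : ∀ i, Measurable (X i)) (x : E) :
    MeasurableSet {ω | x ∈ convexHull ℝ (Set.range fun i => X i ω)} :=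
  (isClosed_setOf_mem_convexHull_range x).measurableSet.preimage (measurable_pi_lambda _ hX)

theorem stmt15_general {Ω : Type*} [MeasurableSpace Ω] (μ : Measure Ω)
    (p : ℕ) (X : Fin (p + 1) → Ω → EuclideanSpace ℝ (Fin p))
    (hX : ∀ i, Measurable (X i)) (x : EuclideanSpace ℝ (Fin p)) :
    {ω : Ω | ∀ u : EuclideanSpace ℝ (Fin p), ‖u‖ = 1 →
        Finset.univ.inf' Finset.univ_nonempty (fun i => ⟪u, X i ω⟫) ≤ ⟪u, x⟫ ∧
        ⟪u, x⟫ ≤ Finset.univ.sup' Finset.univ_nonempty (fun i => ⟪u, X i ω⟫)} =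
      {ω : Ω | x ∈ convexHull ℝ (Set.range fun i => X i ω)} ∧
    MeasurableSet {ω : Ω | x ∈ convexHull ℝ (Set.range fun i => X i ω)} ∧
    μ {ω : Ω | x ∈ convexHull ℝ (Set.range fun i => X i ω)} =
      μ {ω : Ω | ∀ u : EuclideanSpace ℝ (Fin p), ‖u‖ = 1 →
        Finset.univ.inf' Finset.univ_nonempty (fun i => ⟪u, X i ω⟫) ≤ ⟪u, x⟫ ∧
        ⟪u, x⟫ ≤ Finset.univ.sup' Finset.univ_nonempty (fun i => ⟪u, X i ω⟫)} := by
  have hevent := Set.ext fun ω =>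
    forall_inf'_inner_le_and_le_sup'_iff_mem_convexHull (fun i => X i ω) x
  exact ⟨hevent, measurableSet_setOf_mem_convexHull_range hX x, congrArg μ hevent.symm⟩

/-- Proposition 6 (naive simplicial fuzzy depth of a point reduces to simplicial depth):
the event that the projection of `x` on every unit direction lies between the minimum and
maximum of the projections of `X 0 ω, …, X p ω` coincides with the event that `x` lies in the
convex hull of `{X 0 ω, …, X p ω}`; in particular this event is measurable and both events
have the same probability. -/
theorem stmt15 {Ω : Type*} [MeasurableSpace Ω] (μ : Measure Ω) [IsProbabilityMeasure μ]
    (p : ℕ) (hp : 1 ≤ p) (X : Fin (p + 1) → Ω → EuclideanSpace ℝ (Fin p))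
    (hX : ∀ i, Measurable (X i)) (x : EuclideanSpace ℝ (Fin p)) :
    {ω : Ω | ∀ u : EuclideanSpace ℝ (Fin p), ‖u‖ = 1 →
        Finset.univ.inf' Finset.univ_nonempty (fun i => ⟪u, X i ω⟫) ≤ ⟪u, x⟫ ∧
        ⟪u, x⟫ ≤ Finset.univ.sup' Finset.univ_nonempty (fun i => ⟪u, X i ω⟫)} =
      {ω : Ω | x ∈ convexHull ℝ (Set.range fun i => X i ω)} ∧
    MeasurableSet {ω : Ω | x ∈ convexHull ℝ (Set.range fun i => X i ω)} ∧
    μ {ω : Ω | x ∈ convexHull ℝ (Set.range fun i => X i ω)} =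
      μ {ω : Ω | ∀ u : EuclideanSpace ℝ (Fin p), ‖u‖ = 1 →
        Finset.univ.inf' Finset.univ_nonempty (fun i => ⟪u, X i ω⟫) ≤ ⟪u, x⟫ ∧
        ⟪u, x⟫ ≤ Finset.univ.sup' Finset.univ_nonempty (fun i => ⟪u, X i ω⟫)} :=
  stmt15_general μ p X hX x
end

section
/- In ℝ (p = 1), let A = [0,1] and B = [3,4]. Then: (i) the singleton {2} belongs to the pseudosimplex S_c[A,B], i.e., min(s_A(u), s_B(u)) ≤ s_{{2}}(u) ≤ max(s_A(u), s_B(u)) for u ∈ {−1,1}; but (ii) there is no λ ∈ [0,1] such that λ • A + (1−λ) • B = {2}, where λ • A + (1−λ) • B denotes the Minkowski sum {λa + (1−λ)b : a ∈ A, b ∈ B}. Hence the pseudosimplex S_c[A,B] strictly contains the set of convex combinations of A and B. -/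
open scoped Pointwise

lemma smul_Icc_nonneg {r a b : ℝ} (hr : 0 ≤ r) (hab : a ≤ b) :
    r • Set.Icc a b = Set.Icc (r * a) (r * b) := by
  rcases hr.lt_or_eq with h | h
  · simpa using LinearOrderedField.smul_Icc h (a := a) (b := b)
  · subst h
    rw [zero_mul, zero_mul, Set.zero_smul_set (Set.nonempty_Icc.2 hab), Set.Icc_self]
    rfl

lemma comb_eq (l : ℝ) (hl : l ∈ Set.Icc (0 : ℝ) 1) :
    l • Set.Icc (0 : ℝ) 1 + (1 - l) • Set.Icc (3 : ℝ) 4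
      = Set.Icc (3 - 3 * l) (4 - 3 * l) := by
  obtain ⟨h0, h1⟩ := hl
  rw [smul_Icc_nonneg h0 (by norm_num), smul_Icc_nonneg (by linarith) (by norm_num),
    Set.Icc_add_Icc (by linarith) (by linarith)]
  congr 1 <;> ring

lemma img_one (a b : ℝ) : (fun v => (1 : ℝ) * v) '' Set.Icc a b = Set.Icc a b := by
  simp

lemma img_neg (a b : ℝ) :
    (fun v => (-1 : ℝ) * v) '' Set.Icc a b = Set.Icc (-b) (-a) := by
  ext x
  constructor
  · rintro ⟨v, hv, rfl⟩
    simp only [Set.mem_Icc] at hv ⊢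
    constructor <;> linarith [hv.1, hv.2]
  · intro hx
    simp only [Set.mem_Icc] at hx
    exact ⟨-x, Set.mem_Icc.2 ⟨by linarith [hx.1, hx.2], by linarith [hx.1, hx.2]⟩, by ring⟩

/-- Example 1: for `A = [0,1]` and `B = [3,4]` in `ℝ`, (i) the singleton `{2}` belongs to the
pseudosimplex `S_c[A,B]`; (ii) `{2}` is not a Minkowski convex combination `l • A + (1-l) • B`;
hence the pseudosimplex strictly contains the set of convex combinations of `A` and `B`. -/
theorem stmt17 :
    (∀ u ∈ ({-1, 1} : Set ℝ),
      min (sSup ((fun v => u * v) '' Set.Icc (0 : ℝ) 1))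
          (sSup ((fun v => u * v) '' Set.Icc (3 : ℝ) 4)) ≤
        sSup ((fun v => u * v) '' ({2} : Set ℝ)) ∧
      sSup ((fun v => u * v) '' ({2} : Set ℝ)) ≤
        max (sSup ((fun v => u * v) '' Set.Icc (0 : ℝ) 1))
          (sSup ((fun v => u * v) '' Set.Icc (3 : ℝ) 4))) ∧
    (¬ ∃ l ∈ Set.Icc (0 : ℝ) 1,
      l • Set.Icc (0 : ℝ) 1 + (1 - l) • Set.Icc (3 : ℝ) 4 = ({2} : Set ℝ)) ∧
    {S : Set ℝ | ∃ l ∈ Set.Icc (0 : ℝ) 1,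
        S = l • Set.Icc (0 : ℝ) 1 + (1 - l) • Set.Icc (3 : ℝ) 4} ⊂
      {S : Set ℝ | S.Nonempty ∧ IsCompact S ∧ Convex ℝ S ∧
        ∀ u ∈ ({-1, 1} : Set ℝ),
          min (sSup ((fun v => u * v) '' Set.Icc (0 : ℝ) 1))
              (sSup ((fun v => u * v) '' Set.Icc (3 : ℝ) 4)) ≤
            sSup ((fun v => u * v) '' S) ∧
          sSup ((fun v => u * v) '' S) ≤
            max (sSup ((fun v => u * v) '' Set.Icc (0 : ℝ) 1))
              (sSup ((fun v => u * v) '' Set.Icc (3 : ℝ) 4))} := by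
  have key : ∀ u ∈ ({-1, 1} : Set ℝ),
      min (sSup ((fun v => u * v) '' Set.Icc (0 : ℝ) 1))
          (sSup ((fun v => u * v) '' Set.Icc (3 : ℝ) 4)) ≤
        sSup ((fun v => u * v) '' ({2} : Set ℝ)) ∧
      sSup ((fun v => u * v) '' ({2} : Set ℝ)) ≤
        max (sSup ((fun v => u * v) '' Set.Icc (0 : ℝ) 1))
          (sSup ((fun v => u * v) '' Set.Icc (3 : ℝ) 4)) := by
    rintro u (rfl | rfl)
    · rw [img_neg, img_neg, Set.image_singleton, csSup_singleton,
        csSup_Icc (by norm_num), csSup_Icc (by norm_num)]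
      norm_num
    · rw [img_one, img_one, Set.image_singleton, csSup_singleton,
        csSup_Icc (by norm_num), csSup_Icc (by norm_num)]
      norm_num
  have notcomb : ¬ ∃ l ∈ Set.Icc (0 : ℝ) 1,
      l • Set.Icc (0 : ℝ) 1 + (1 - l) • Set.Icc (3 : ℝ) 4 = ({2} : Set ℝ) := by
    rintro ⟨l, hl, h⟩
    rw [comb_eq l hl] at h
    have h1 : (3 - 3 * l : ℝ) ∈ ({2} : Set ℝ) := by
      rw [← h]; exact Set.left_mem_Icc.2 (by linarith)
    have h2 : (4 - 3 * l : ℝ) ∈ ({2} : Set ℝ) := by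
      rw [← h]; exact Set.right_mem_Icc.2 (by linarith)
    simp only [Set.mem_singleton_iff] at h1 h2
    linarith
  refine ⟨key, notcomb, ?_, ?_⟩
  · rintro S ⟨l, hl, rfl⟩
    rw [comb_eq l hl]
    obtain ⟨h0, h1⟩ := hl
    refine ⟨Set.nonempty_Icc.2 (by linarith), isCompact_Icc, convex_Icc _ _, ?_⟩
    rintro u (rfl | rfl)
    · rw [img_neg, img_neg, img_neg, csSup_Icc (by norm_num),
        csSup_Icc (by norm_num), csSup_Icc (by linarith)]
      constructor
      · simp only [min_le_iff]; right; linarith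
      · simp only [le_max_iff]; left; linarith
    · rw [img_one, img_one, img_one, csSup_Icc (by norm_num),
        csSup_Icc (by norm_num), csSup_Icc (by linarith)]
      constructor
      · simp only [min_le_iff]; left; linarith
      · simp only [le_max_iff]; right; linarith
  · intro hsub
    have h2 : ({2} : Set ℝ) ∈ {S : Set ℝ | S.Nonempty ∧ IsCompact S ∧ Convex ℝ S ∧
        ∀ u ∈ ({-1, 1} : Set ℝ),
          min (sSup ((fun v => u * v) '' Set.Icc (0 : ℝ) 1))
              (sSup ((fun v => u * v) '' Set.Icc (3 : ℝ) 4)) ≤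
            sSup ((fun v => u * v) '' S) ∧
          sSup ((fun v => u * v) '' S) ≤
            max (sSup ((fun v => u * v) '' Set.Icc (0 : ℝ) 1))
              (sSup ((fun v => u * v) '' Set.Icc (3 : ℝ) 4))} :=
      ⟨Set.singleton_nonempty _, isCompact_singleton, convex_singleton _, key⟩
    obtain ⟨l, hl, h⟩ := hsub h2
    exact notcomb ⟨l, hl, h.symm⟩
end
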